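/- Let n ≥ 3, and suppose V : ℝⁿ₊ → ℝⁿ is a smooth vector field. Define S_{ik} = ∂ᵢVₖ + ∂ₖVᵢ − (2/n)(div V)δ_{ik} and ψ = Σ_l ∂_l v_ε · V_l + ((n−2)/(2n)) · v_ε · div V, where v_ε(x) = ε^((n-2)/2)·((ε+xₙ)² + Σ_a x_a²)^(-(n-2)/2). Then ψ satisfies Δψ = Σ_{i,k} ( (n−2)/(4(n−1)) · v_ε · ∂ᵢ∂ₖ S_{ik} + ∂ₖ(∂ᵢv_ε · S_{ik}) ) in the interior of ℝⁿ₊. -/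

import Mathlib

open scoped BigOperators
open MeasureTheory

noncomputable section

abbrev E (n : ℕ) := EuclideanSpace ℝ (Fin n)

/-- Partial derivative in the `i`-th coordinate direction. -/
def pder {n : ℕ} (i : Fin n) (f : E n → ℝ) (x : E n) : ℝ :=
  fderiv ℝ f x (EuclideanSpace.single i 1)

/-- Euclidean Laplacian. -/
def lap {n : ℕ} (f : E n → ℝ) (x : E n) : ℝ :=
  ∑ i, pder i (pder i f) x

/-- The index of the last ("normal") coordinate `x_n`. -/
def nIdx (n : ℕ) (hn : 0 < n) : Fin n := ⟨n - 1, Nat.sub_lt hn one_pos⟩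

/-- The model function `v_ε` on the upper half-space. -/
def vE (n : ℕ) (hn : 0 < n) (ε : ℝ) (x : E n) : ℝ :=
  ε ^ (((n : ℝ) - 2) / 2) *
    ((ε + x (nIdx n hn)) ^ 2 + ∑ a ∈ Finset.univ.erase (nIdx n hn), x a ^ 2) ^
      (-(((n : ℝ) - 2) / 2))

/-- Divergence of a vector field. -/
def divV {n : ℕ} (V : E n → E n) (x : E n) : ℝ := ∑ i, pder i (fun z => V z i) x

/-- The conformal Killing operator `S_{ik} = ∂ᵢVₖ + ∂ₖVᵢ - (2/n)(div V)δ_{ik}`. -/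
def Smat {n : ℕ} (V : E n → E n) (i k : Fin n) (x : E n) : ℝ :=
  pder i (fun z => V z k) x + pder k (fun z => V z i) x -
    (2 / (n : ℝ)) * divV V x * (if i = k then 1 else 0)

/-- The correction term `ψ = Σ_l ∂_l v_ε · V_l + ((n-2)/(2n)) v_ε div V`. -/
def psiF (n : ℕ) (hn : 0 < n) (ε : ℝ) (V : E n → E n) (x : E n) : ℝ :=
  ∑ l, pder l (vE n hn ε) x * V x l +
    (((n : ℝ) - 2) / (2 * n)) * vE n hn ε x * divV V x

variable {n : ℕ} {f g : E n → ℝ} {x : E n} {i k : Fin n}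

lemma pder_congr (h : f =ᶠ[nhds x] g) : pder i f x = pder i g x := by
  unfold pder; rw [h.fderiv_eq]

lemma contDiffAt_pder (hf : ContDiffAt ℝ (⊤ : ℕ∞) f x) : ContDiffAt ℝ (⊤ : ℕ∞) (pder i f) x := by
  have h1 : ContDiffAt ℝ (⊤ : ℕ∞) (fderiv ℝ f) x := hf.fderiv_right (by simp)
  exact ((ContinuousLinearMap.apply ℝ ℝ
    (EuclideanSpace.single i (1:ℝ))).contDiff.contDiffAt).comp x h1

lemma pder_of_hasFDerivAt {f' : E n →L[ℝ] ℝ} (hf : HasFDerivAt f f' x) :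
    pder i f x = f' (EuclideanSpace.single i 1) := by
  unfold pder; rw [hf.fderiv]

lemma pder_add (hf : DifferentiableAt ℝ f x) (hg : DifferentiableAt ℝ g x) :
    pder i (fun y => f y + g y) x = pder i f x + pder i g x := by
  unfold pder; rw [fderiv_fun_add hf hg]; rfl

lemma pder_sub (hf : DifferentiableAt ℝ f x) (hg : DifferentiableAt ℝ g x) :
    pder i (fun y => f y - g y) x = pder i f x - pder i g x := by
  unfold pder; rw [fderiv_fun_sub hf hg]; rfl

lemma pder_mul (hf : DifferentiableAt ℝ f x) (hg : DifferentiableAt ℝ g x) :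
    pder i (fun y => f y * g y) x = pder i f x * g x + f x * pder i g x := by
  unfold pder; rw [fderiv_fun_mul hf hg]; simp only [ContinuousLinearMap.add_apply, ContinuousLinearMap.smul_apply, smul_eq_mul]; ring

lemma pder_const_mul (c : ℝ) (hf : DifferentiableAt ℝ f x) :
    pder i (fun y => c * f y) x = c * pder i f x := by
  unfold pder; rw [fderiv_const_mul hf]; rfl

lemma pder_sum {ι : Type*} (s : Finset ι) (F : ι → E n → ℝ)
    (h : ∀ j ∈ s, DifferentiableAt ℝ (F j) x) :
    pder i (fun y => ∑ j ∈ s, F j y) x = ∑ j ∈ s, pder i (F j) x := by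
  unfold pder; rw [fderiv_fun_sum h]; simp

lemma pder_comm (hf : ContDiffAt ℝ (⊤ : ℕ∞) f x) :
    pder i (pder k f) x = pder k (pder i f) x := by
  have hsymm : IsSymmSndFDerivAt ℝ f x := hf.isSymmSndFDerivAt (by rw [minSmoothness_of_isRCLikeNormedField]; exact WithTop.coe_le_coe.2 le_top)
  have hd : DifferentiableAt ℝ (fderiv ℝ f) x :=
    (hf.fderiv_right (m := 1) (WithTop.coe_le_coe.2 le_top)).differentiableAt one_ne_zero
  have key : ∀ v w : E n, fderiv ℝ (fun y => fderiv ℝ f y w) x v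
      = fderiv ℝ (fderiv ℝ f) x v w := fun v w => by
    have : HasFDerivAt (fun y => fderiv ℝ f y w)
        ((ContinuousLinearMap.apply ℝ ℝ w).comp (fderiv ℝ (fderiv ℝ f) x)) x :=
      (ContinuousLinearMap.apply ℝ ℝ w).hasFDerivAt.comp x hd.hasFDerivAt
    rw [this.fderiv]; rfl
  show fderiv ℝ (fun y => fderiv ℝ f y (EuclideanSpace.single k 1)) x (EuclideanSpace.single i 1) = _
  rw [key, hsymm.eq, ← key]; rfl


lemma proj_apply' {n : ℕ} (a : Fin n) (y : E n) : (EuclideanSpace.proj a : E n →L[ℝ] ℝ) y = y a := rfl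

/-- `f` is smooth at every point near `x`. -/
def SmoothNear (f : E n → ℝ) (x : E n) : Prop := ∀ᶠ y in nhds x, ContDiffAt ℝ (⊤ : ℕ∞) f y

namespace SmoothNear

lemma self (hf : SmoothNear f x) : ContDiffAt ℝ (⊤ : ℕ∞) f x := hf.self_of_nhds
lemma dAt (hf : SmoothNear f x) : DifferentiableAt ℝ f x :=
  hf.self.differentiableAt (by simp)
lemma pder' (hf : SmoothNear f x) (i : Fin n) : SmoothNear (pder i f) x :=
  hf.mono fun _ hy => contDiffAt_pder hy
lemma mul (hf : SmoothNear f x) (hg : SmoothNear g x) :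
    SmoothNear (fun y => f y * g y) x := by
  filter_upwards [hf, hg] with y h1 h2; exact h1.mul h2
lemma add (hf : SmoothNear f x) (hg : SmoothNear g x) :
    SmoothNear (fun y => f y + g y) x := by
  filter_upwards [hf, hg] with y h1 h2; exact h1.add h2
lemma sub (hf : SmoothNear f x) (hg : SmoothNear g x) :
    SmoothNear (fun y => f y - g y) x := by
  filter_upwards [hf, hg] with y h1 h2; exact h1.sub h2
lemma const_mul (c : ℝ) (hf : SmoothNear f x) :
    SmoothNear (fun y => c * f y) x := by
  filter_upwards [hf] with y h1; exact h1.const_smul c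
lemma sum {ι : Type*} (s : Finset ι) (F : ι → E n → ℝ)
    (h : ∀ j ∈ s, SmoothNear (F j) x) :
    SmoothNear (fun y => ∑ j ∈ s, F j y) x := by
  classical
  induction s using Finset.induction_on with
  | empty => simp only [Finset.sum_empty]; exact Filter.Eventually.of_forall fun y => contDiffAt_const
  | @insert a s' hj ih =>
    simp only [Finset.sum_insert hj]
    exact (h a (Finset.mem_insert_self a s')).add
      (ih fun j hjs => h j (Finset.mem_insert_of_mem hjs))
lemma ofContDiff (hf : ContDiff ℝ (⊤ : ℕ∞) f) : SmoothNear f x :=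
  Filter.Eventually.of_forall fun _ => hf.contDiffAt

end SmoothNear

lemma pder_mul_event (hf : SmoothNear f x) (hg : SmoothNear g x) (i : Fin n) :
    pder i (fun y => f y * g y) =ᶠ[nhds x] fun y => pder i f y * g y + f y * pder i g y := by
  filter_upwards [hf, hg] with y h1 h2
  exact pder_mul (h1.differentiableAt (by simp)) (h2.differentiableAt (by simp))

lemma lap_mul (hf : SmoothNear f x) (hg : SmoothNear g x) :
    lap (fun y => f y * g y) x =
      lap f x * g x + 2 * ∑ i, pder i f x * pder i g x + f x * lap g x := by
  unfold lap
  have key : ∀ i : Fin n, pder i (pder i (fun y => f y * g y)) x =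
      (pder i (pder i f) x * g x + pder i f x * pder i g x) +
      (pder i f x * pder i g x + f x * pder i (pder i g) x) := by
    intro i
    rw [pder_congr (pder_mul_event hf hg i),
      pder_add ((hf.pder' i).dAt.fun_mul hg.dAt) (hf.dAt.fun_mul (hg.pder' i).dAt),
      pder_mul (hf.pder' i).dAt hg.dAt, pder_mul hf.dAt (hg.pder' i).dAt]
  rw [Finset.sum_congr rfl fun i _ => key i]
  simp only [Finset.sum_add_distrib, ← Finset.sum_mul, ← Finset.mul_sum]
  ring

lemma lap_sum {ι : Type*} (s : Finset ι) (F : ι → E n → ℝ)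
    (h : ∀ j ∈ s, SmoothNear (F j) x) :
    lap (fun y => ∑ j ∈ s, F j y) x = ∑ j ∈ s, lap (F j) x := by
  unfold lap
  have key : ∀ i : Fin n, pder i (pder i (fun y => ∑ j ∈ s, F j y)) x =
      ∑ j ∈ s, pder i (pder i (F j)) x := by
    intro i
    have ev : pder i (fun y => ∑ j ∈ s, F j y) =ᶠ[nhds x] fun y => ∑ j ∈ s, pder i (F j) y := by
      have : ∀ᶠ y in nhds x, ∀ j ∈ s, ContDiffAt ℝ (⊤ : ℕ∞) (F j) y := by
        rw [Filter.eventually_all_finset]; exact h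
      filter_upwards [this] with y hy
      exact pder_sum s F fun j hj => ((hy j hj).differentiableAt (by simp))
    rw [pder_congr ev, pder_sum s _ fun j hj => ((h j hj).pder' i).dAt]
  rw [Finset.sum_congr rfl fun i _ => key i, Finset.sum_comm]

lemma lap_const_mul (c : ℝ) (hf : SmoothNear f x) :
    lap (fun y => c * f y) x = c * lap f x := by
  unfold lap
  have key : ∀ i : Fin n, pder i (pder i (fun y => c * f y)) x =
      c * pder i (pder i f) x := by
    intro i
    have ev : pder i (fun y => c * f y) =ᶠ[nhds x] fun y => c * pder i f y := by
      filter_upwards [hf] with y hy; exact pder_const_mul c (hy.differentiableAt (by simp))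
    rw [pder_congr ev, pder_const_mul c (hf.pder' i).dAt]
  rw [Finset.sum_congr rfl fun i _ => key i, Finset.mul_sum]

lemma lap_add (hf : SmoothNear f x) (hg : SmoothNear g x) :
    lap (fun y => f y + g y) x = lap f x + lap g x := by
  unfold lap
  have key : ∀ i : Fin n, pder i (pder i (fun y => f y + g y)) x =
      pder i (pder i f) x + pder i (pder i g) x := by
    intro i
    have ev : pder i (fun y => f y + g y) =ᶠ[nhds x] fun y => pder i f y + pder i g y := by
      filter_upwards [hf, hg] with y h1 h2
      exact pder_add (h1.differentiableAt (by simp)) (h2.differentiableAt (by simp))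
    rw [pder_congr ev, pder_add (hf.pder' i).dAt (hg.pder' i).dAt]
  rw [Finset.sum_congr rfl fun i _ => key i, Finset.sum_add_distrib]


section vESec
variable (n : ℕ) (hn : 0 < n) (ε : ℝ)

def Wf (a : Fin n) (x : E n) : ℝ := x a + (if a = nIdx n hn then ε else 0)
def Qf (x : E n) : ℝ := ∑ a, (Wf n hn ε a x) ^ 2

variable {n} {x : E n} {i : Fin n}

lemma hasFDerivAt_W (a : Fin n) (x : E n) :
    HasFDerivAt (Wf n hn ε a) (EuclideanSpace.proj a : E n →L[ℝ] ℝ) x := by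
  unfold Wf
  have h0 : HasFDerivAt (fun y : E n => y a) (EuclideanSpace.proj a : E n →L[ℝ] ℝ) x :=
    (EuclideanSpace.proj a : E n →L[ℝ] ℝ).hasFDerivAt
  exact h0.add_const _

def QL (x : E n) : E n →L[ℝ] ℝ :=
  ∑ a, (2 * Wf n hn ε a x) • (EuclideanSpace.proj a : E n →L[ℝ] ℝ)

lemma hasFDerivAt_Q (x : E n) : HasFDerivAt (Qf n hn ε) (QL hn ε x) x := by
  have h : ∀ a : Fin n, HasFDerivAt (fun y => (Wf n hn ε a y) ^ 2)
      ((2 * Wf n hn ε a x) • (EuclideanSpace.proj a : E n →L[ℝ] ℝ)) x := by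
    intro a
    have h2 := (hasFDerivAt_W hn ε a (x := x)).fun_mul (hasFDerivAt_W hn ε a (x := x))
    have : HasFDerivAt (fun y => Wf n hn ε a y ^ 2)
        (Wf n hn ε a x • (EuclideanSpace.proj a : E n →L[ℝ] ℝ)
          + Wf n hn ε a x • (EuclideanSpace.proj a : E n →L[ℝ] ℝ)) x := by
      simpa only [pow_two] using h2
    rw [two_mul, add_smul]
    exact this
  exact HasFDerivAt.fun_sum fun a _ => h a

lemma QL_apply (x : E n) (i : Fin n) :
    QL hn ε x (EuclideanSpace.single i 1) = 2 * Wf n hn ε i x := by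
  unfold QL
  simp only [ContinuousLinearMap.sum_apply, ContinuousLinearMap.smul_apply,
    proj_apply', EuclideanSpace.single_apply, smul_eq_mul]
  rw [Finset.sum_eq_single i] <;> simp +contextual

lemma contDiff_Q : ContDiff ℝ (⊤ : ℕ∞) (Qf n hn ε) := by
  apply ContDiff.sum
  intro a _
  have h1 : ContDiff ℝ (⊤ : ℕ∞) (fun y : E n => y a) := (EuclideanSpace.proj (𝕜 := ℝ) a).contDiff
  have h2 : ContDiff ℝ (⊤ : ℕ∞) (Wf n hn ε a) := by unfold Wf; exact h1.add contDiff_const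
  exact h2.pow 2

lemma isOpen_U : IsOpen {y : E n | 0 < Qf n hn ε y} :=
  isOpen_lt continuous_const (contDiff_Q hn ε).continuous

lemma vE_eq (x : E n) :
    vE n hn ε x = ε ^ (((n : ℝ) - 2) / 2) * (Qf n hn ε x) ^ (-(((n : ℝ) - 2) / 2)) := by
  unfold vE Qf
  congr 2
  rw [← Finset.add_sum_erase _ _ (Finset.mem_univ (nIdx n hn))]
  congr 1
  · unfold Wf; simp [add_comm]
  · apply Finset.sum_congr rfl
    intro a ha
    unfold Wf
    rw [if_neg (Finset.mem_erase.1 ha).1]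
    ring

lemma hasFDerivAt_Qpow (m : ℝ) (hx : 0 < Qf n hn ε x) :
    HasFDerivAt (fun y => Qf n hn ε y ^ m)
      ((m * Qf n hn ε x ^ (m - 1)) • QL hn ε x) x :=
  (hasFDerivAt_Q hn ε x).rpow_const (Or.inl hx.ne')

lemma pder_Qpow (m : ℝ) (hx : 0 < Qf n hn ε x) :
    pder i (fun y => Qf n hn ε y ^ m) x
      = m * Qf n hn ε x ^ (m - 1) * (2 * Wf n hn ε i x) := by
  rw [pder_of_hasFDerivAt (hasFDerivAt_Qpow hn ε m hx)]
  simp [QL_apply, mul_assoc]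

lemma pder_QW (m : ℝ) (j : Fin n) (hx : 0 < Qf n hn ε x) :
    pder i (fun y => Qf n hn ε y ^ m * Wf n hn ε j y) x
      = m * Qf n hn ε x ^ (m - 1) * (2 * Wf n hn ε i x) * Wf n hn ε j x
        + Qf n hn ε x ^ m * (if j = i then 1 else 0) := by
  have h := (hasFDerivAt_Qpow hn ε m hx).fun_mul (hasFDerivAt_W hn ε j x)
  rw [pder_of_hasFDerivAt h]
  simp only [ContinuousLinearMap.add_apply, ContinuousLinearMap.smul_apply, smul_eq_mul,
    QL_apply, proj_apply', EuclideanSpace.single_apply]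
  ring

lemma pder_QWW (m : ℝ) (j j' : Fin n) (hx : 0 < Qf n hn ε x) :
    pder i (fun y => Qf n hn ε y ^ m * Wf n hn ε j y * Wf n hn ε j' y) x
      = (m * Qf n hn ε x ^ (m - 1) * (2 * Wf n hn ε i x) * Wf n hn ε j x
          + Qf n hn ε x ^ m * (if j = i then 1 else 0)) * Wf n hn ε j' x
        + Qf n hn ε x ^ m * Wf n hn ε j x * (if j' = i then 1 else 0) := by
  have h := ((hasFDerivAt_Qpow hn ε m hx).fun_mul (hasFDerivAt_W hn ε j x)).fun_mul
    (hasFDerivAt_W hn ε j' x)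
  rw [pder_of_hasFDerivAt h]
  simp only [ContinuousLinearMap.add_apply, ContinuousLinearMap.smul_apply, smul_eq_mul,
    QL_apply, proj_apply', EuclideanSpace.single_apply]
  ring

def pC (n : ℕ) : ℝ := ((n : ℝ) - 2) / 2
def KC (n : ℕ) (ε : ℝ) : ℝ := ε ^ pC n * (-2 * pC n)

lemma Q_pos (hε : 0 < ε) (hx : 0 < x (nIdx n hn)) : 0 < Qf n hn ε x := by
  have h1 : 0 < Wf n hn ε (nIdx n hn) x := by
    unfold Wf; rw [if_pos rfl]; linarith
  calc (0:ℝ) < Wf n hn ε (nIdx n hn) x ^ 2 := pow_pos h1 2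
    _ ≤ ∑ a, Wf n hn ε a x ^ 2 :=
        Finset.single_le_sum (f := fun a => Wf n hn ε a x ^ 2)
          (fun a _ => sq_nonneg _) (Finset.mem_univ _)

lemma vE_fun_eq : vE n hn ε = fun y => ε ^ pC n * Qf n hn ε y ^ (-pC n) :=
  funext fun y => vE_eq hn ε y

lemma smoothNear_vE (hx : 0 < Qf n hn ε x) : SmoothNear (vE n hn ε) x := by
  filter_upwards [(isOpen_U hn ε).mem_nhds hx] with y hy
  rw [vE_fun_eq hn ε]
  exact contDiffAt_const.mul (((contDiff_Q hn ε).contDiffAt).rpow_const_of_ne (ne_of_gt hy))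

lemma pder_vE (hx : 0 < Qf n hn ε x) :
    pder i (vE n hn ε) x = KC n ε * (Qf n hn ε x ^ (-pC n - 1) * Wf n hn ε i x) := by
  rw [vE_fun_eq hn ε]
  rw [pder_const_mul _ (hasFDerivAt_Qpow hn ε (-pC n) hx).differentiableAt]
  rw [pder_Qpow hn ε (-pC n) hx]
  unfold KC; ring

lemma ev_pder_vE (hx : 0 < Qf n hn ε x) :
    pder i (vE n hn ε) =ᶠ[nhds x]
      fun y => KC n ε * (Qf n hn ε y ^ (-pC n - 1) * Wf n hn ε i y) := by
  filter_upwards [(isOpen_U hn ε).mem_nhds hx] with y hy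
  exact pder_vE hn ε hy

lemma pder2_vE (k : Fin n) (hx : 0 < Qf n hn ε x) :
    pder k (pder i (vE n hn ε)) x =
      KC n ε * ((-pC n - 1) * Qf n hn ε x ^ (-pC n - 1 - 1) * (2 * Wf n hn ε k x) * Wf n hn ε i x
        + Qf n hn ε x ^ (-pC n - 1) * (if i = k then 1 else 0)) := by
  rw [pder_congr (ev_pder_vE hn ε hx)]
  have hd : DifferentiableAt ℝ (fun y => Qf n hn ε y ^ (-pC n - 1) * Wf n hn ε i y) x :=
    ((hasFDerivAt_Qpow hn ε _ hx).mul (hasFDerivAt_W hn ε i x)).differentiableAt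
  rw [pder_const_mul _ hd, pder_QW hn ε (-pC n - 1) i hx]

lemma ev_pder2_vE (k : Fin n) (hx : 0 < Qf n hn ε x) :
    pder k (pder i (vE n hn ε)) =ᶠ[nhds x]
      fun y => (KC n ε * ((-pC n - 1) * 2)) *
          (Qf n hn ε y ^ (-pC n - 1 - 1) * Wf n hn ε k y * Wf n hn ε i y)
        + (KC n ε * (if i = k then 1 else 0)) * Qf n hn ε y ^ (-pC n - 1) := by
  filter_upwards [(isOpen_U hn ε).mem_nhds hx] with y hy
  rw [pder2_vE hn ε k hy]; ring

lemma lap_vE (hx : 0 < Qf n hn ε x) : lap (vE n hn ε) x = 0 := by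
  unfold lap
  have h : ∀ j : Fin n, pder j (pder j (vE n hn ε)) x =
      (KC n ε * (-pC n - 1) * 2 * Qf n hn ε x ^ (-pC n - 1 - 1)) * Wf n hn ε j x ^ 2
        + KC n ε * Qf n hn ε x ^ (-pC n - 1) := by
    intro j
    rw [pder2_vE hn ε j hx, if_pos rfl]; ring
  rw [Finset.sum_congr rfl fun j _ => h j]
  rw [Finset.sum_add_distrib, ← Finset.mul_sum, Finset.sum_const, Finset.card_univ,
    Fintype.card_fin, nsmul_eq_mul]
  have hQ : ∑ j, Wf n hn ε j x ^ 2 = Qf n hn ε x := rfl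
  rw [hQ]
  have hstep : Qf n hn ε x ^ (-pC n - 1 - 1) * Qf n hn ε x = Qf n hn ε x ^ (-pC n - 1) := by
    rw [← Real.rpow_add_one (ne_of_gt hx) (-pC n - 1 - 1)]; norm_num
  have hn2 : (n : ℝ) = 2 * pC n + 2 := by unfold pC; ring
  linear_combination (KC n ε * (-pC n - 1) * 2) * hstep
    + (KC n ε * Qf n hn ε x ^ (-pC n - 1)) * hn2

lemma lap_pder_vE (l : Fin n) (hx : 0 < Qf n hn ε x) : lap (pder l (vE n hn ε)) x = 0 := by
  unfold lap
  have h : ∀ j : Fin n, pder j (pder j (pder l (vE n hn ε))) x =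
      ((KC n ε * ((-pC n - 1) * 2)) * (-pC n - 1 - 1) * 2 * Qf n hn ε x ^ (-pC n - 1 - 1 - 1)
          * Wf n hn ε l x) * Wf n hn ε j x ^ 2
        + (KC n ε * ((-pC n - 1) * 2)) * Qf n hn ε x ^ (-pC n - 1 - 1) * Wf n hn ε l x
        + (2 * (KC n ε * ((-pC n - 1) * 2)) * Qf n hn ε x ^ (-pC n - 1 - 1)) *
            (Wf n hn ε j x * (if l = j then 1 else 0)) := by
    intro j
    rw [pder_congr (ev_pder2_vE hn ε (i := l) j hx)]
    have hd1 : DifferentiableAt ℝ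
        (fun y => Qf n hn ε y ^ (-pC n - 1 - 1) * Wf n hn ε j y * Wf n hn ε l y) x :=
      (((hasFDerivAt_Qpow hn ε _ hx).mul (hasFDerivAt_W hn ε j x)).mul
        (hasFDerivAt_W hn ε l x)).differentiableAt
    have hd2 : DifferentiableAt ℝ (fun y => Qf n hn ε y ^ (-pC n - 1)) x :=
      (hasFDerivAt_Qpow hn ε _ hx).differentiableAt
    rw [pder_add (hd1.const_mul _) (hd2.const_mul _), pder_const_mul _ hd1,
      pder_const_mul _ hd2, pder_QWW hn ε (-pC n - 1 - 1) j l hx,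
      pder_Qpow hn ε (-pC n - 1) hx, if_pos rfl]
    ring
  rw [Finset.sum_congr rfl fun j _ => h j]
  rw [Finset.sum_add_distrib, Finset.sum_add_distrib, ← Finset.mul_sum, ← Finset.mul_sum,
    Finset.sum_const, Finset.card_univ, Fintype.card_fin, nsmul_eq_mul]
  have hQ : ∑ j, Wf n hn ε j x ^ 2 = Qf n hn ε x := rfl
  have hW : ∑ j, Wf n hn ε j x * (if l = j then 1 else 0) = Wf n hn ε l x := by
    rw [Finset.sum_eq_single l]
    · rw [if_pos rfl, mul_one]
    · intro b _ hb; rw [if_neg (fun hh => hb hh.symm), mul_zero]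
    · intro hb; exact absurd (Finset.mem_univ l) hb
  rw [hQ, ← Finset.mul_sum, hW]
  have hstep : Qf n hn ε x ^ (-pC n - 1 - 1 - 1) * Qf n hn ε x
      = Qf n hn ε x ^ (-pC n - 1 - 1) := by
    rw [← Real.rpow_add_one (ne_of_gt hx) (-pC n - 1 - 1 - 1)]; norm_num
  have hn2 : (n : ℝ) = 2 * pC n + 2 := by unfold pC; ring
  linear_combination ((KC n ε * ((-pC n - 1) * 2)) * (-pC n - 1 - 1) * 2 * Wf n hn ε l x) * hstep
    + ((KC n ε * ((-pC n - 1) * 2)) * Qf n hn ε x ^ (-pC n - 1 - 1) * Wf n hn ε l x) * hn2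

end vESec


section Main
variable {n : ℕ}

lemma contDiff_pder {f : E n → ℝ} (hf : ContDiff ℝ (⊤ : ℕ∞) f) (i : Fin n) :
    ContDiff ℝ (⊤ : ℕ∞) (pder i f) :=
  contDiff_iff_contDiffAt.2 fun _ => contDiffAt_pder hf.contDiffAt

lemma pder_comm_fun {f : E n → ℝ} (hf : ContDiff ℝ (⊤ : ℕ∞) f) (i k : Fin n) :
    pder i (pder k f) = pder k (pder i f) :=
  funext fun _ => pder_comm hf.contDiffAt

lemma pder_sum_fun {ι : Type*} (s : Finset ι) (F : ι → E n → ℝ)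
    (h : ∀ j ∈ s, ContDiff ℝ (⊤ : ℕ∞) (F j)) (i : Fin n) :
    pder i (fun y => ∑ j ∈ s, F j y) = fun y => ∑ j ∈ s, pder i (F j) y :=
  funext fun _ => pder_sum s F fun j hj => ((h j hj).differentiable (by simp)).differentiableAt

lemma sum_delta [NeZero n] (F : Fin n → ℝ) (i : Fin n) :
    (∑ k, F k * (if i = k then 1 else 0)) = F i := by
  rw [Finset.sum_eq_single i]
  · rw [if_pos rfl, mul_one]
  · intro b _ hb; rw [if_neg (fun hh => hb hh.symm), mul_zero]
  · intro hb; exact absurd (Finset.mem_univ i) hb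

end Main

/-- The PDE satisfied by `ψ` in the interior of the half-space. -/
theorem psi_equation (n : ℕ) (hn : 3 ≤ n) (ε : ℝ) (hε : 0 < ε)
    (V : E n → E n) (hV : ContDiff ℝ (⊤ : ℕ∞) V) :
    ∀ x : E n, 0 < x (nIdx n (by omega)) →
      lap (psiF n (by omega) ε V) x =
        ∑ i, ∑ k,
          (((n : ℝ) - 2) / (4 * ((n : ℝ) - 1)) * vE n (by omega) ε x *
              pder i (pder k (Smat V i k)) x +
            pder k (fun y => pder i (vE n (by omega) ε) y * Smat V i k y) x) := by
  intro x hx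
  have hn0 : 0 < n := by omega
  haveI : NeZero n := ⟨by omega⟩
  have hQx : 0 < Qf n hn0 ε x := Q_pos hn0 ε hε hx
  have snv : SmoothNear (vE n hn0 ε) x := smoothNear_vE hn0 ε hQx
  have hVc : ∀ k : Fin n, ContDiff ℝ (⊤ : ℕ∞) (fun z : E n => V z k) := by
    intro k
    have := (EuclideanSpace.proj (𝕜 := ℝ) k).contDiff.comp hV
    exact this
  have hC1 : ∀ (i k : Fin n), ContDiff ℝ (⊤ : ℕ∞) (pder i (fun z => V z k)) :=
    fun i k => contDiff_pder (hVc k) i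
  have hC2 : ∀ (j i k : Fin n), ContDiff ℝ (⊤ : ℕ∞) (pder j (pder i (fun z => V z k))) :=
    fun j i k => contDiff_pder (hC1 i k) j
  have hdivV : divV V = fun y => ∑ l, pder l (fun z => V z l) y := rfl
  have hDiv : ContDiff ℝ (⊤ : ℕ∞) (divV V) := by
    rw [hdivV]; exact ContDiff.sum fun l _ => hC1 l l
  have hSmat_fun : ∀ i k : Fin n, Smat V i k = fun y =>
      pder i (fun z => V z k) y + pder k (fun z => V z i) y
        - 2 / (n:ℝ) * divV V y * (if i = k then 1 else 0) := fun i k => rfl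
  have hSC : ∀ i k : Fin n, ContDiff ℝ (⊤ : ℕ∞) (Smat V i k) := by
    intro i k
    rw [hSmat_fun i k]
    exact ((hC1 i k).add (hC1 k i)).sub ((contDiff_const.mul hDiv).mul contDiff_const)
  have ha2fun : ∀ j m l : Fin n,
      pder j (pder m (fun z => V z l)) = pder m (pder j (fun z => V z l)) :=
    fun j m l => pder_comm_fun (hVc l) j m
  have hu2x : ∀ i k : Fin n,
      pder k (pder i (vE n hn0 ε)) x = pder i (pder k (vE n hn0 ε)) x :=
    fun i k => pder_comm snv.self
  have hpdiv : ∀ i : Fin n,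
      pder i (divV V) = fun y => ∑ l, pder i (pder l (fun z => V z l)) y := by
    intro i
    rw [hdivV]
    exact pder_sum_fun Finset.univ _ (fun l _ => hC1 l l) i
  -- function-level first derivative of Smat
  have hpderS : ∀ i k m : Fin n, pder m (Smat V i k) = fun y =>
      pder m (pder i (fun z => V z k)) y + pder m (pder k (fun z => V z i)) y
        - 2 / (n:ℝ) * (if i = k then 1 else 0) *
            (∑ l, pder m (pder l (fun z => V z l)) y) := by
    intro i k m
    have hS2 : Smat V i k = fun y =>
        (fun y => pder i (fun z => V z k) y + pder k (fun z => V z i) y) y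
          - (fun y => 2 / (n:ℝ) * (if i = k then 1 else 0) * divV V y) y := by
      rw [hSmat_fun i k]; funext y; ring
    funext y
    rw [hS2, pder_sub
        (((((hC1 i k).add (hC1 k i))).differentiable (by simp)).differentiableAt)
        ((((contDiff_const.mul hDiv)).differentiable (by simp)).differentiableAt),
      pder_add (((hC1 i k).differentiable (by simp)).differentiableAt)
        (((hC1 k i).differentiable (by simp)).differentiableAt),
      pder_const_mul _ ((hDiv.differentiable (by simp)).differentiableAt),
      hpdiv m]
  -- value of second derivative of Smat at x
  have h2S : ∀ i k : Fin n, pder i (pder k (Smat V i k)) x =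
      pder i (pder k (pder i (fun z => V z k))) x
        + pder i (pder k (pder k (fun z => V z i))) x
        - 2 / (n:ℝ) * (if i = k then 1 else 0) *
            (∑ l, pder i (pder k (pder l (fun z => V z l))) x) := by
    intro i k
    rw [hpderS i k k]
    have e1 : (fun y => pder k (pder i (fun z => V z k)) y
        + pder k (pder k (fun z => V z i)) y
        - 2 / (n:ℝ) * (if i = k then 1 else 0) *
            (∑ l, pder k (pder l (fun z => V z l)) y))
        = fun y => (fun y => pder k (pder i (fun z => V z k)) y
            + pder k (pder k (fun z => V z i)) y) y
          - (fun y => 2 / (n:ℝ) * (if i = k then 1 else 0) *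
              ((fun y => ∑ l, pder k (pder l (fun z => V z l)) y) y)) y := rfl
    rw [e1, pder_sub
        ((((hC2 k i k).add (hC2 k k i)).differentiable (by simp)).differentiableAt)
        (((contDiff_const.mul (ContDiff.sum fun l _ => hC2 k l l)).differentiable (by simp)).differentiableAt),
      pder_add (((hC2 k i k).differentiable (by simp)).differentiableAt)
        (((hC2 k k i).differentiable (by simp)).differentiableAt),
      pder_const_mul _ (((ContDiff.sum fun l _ => hC2 k l l).differentiable (by simp)).differentiableAt),
      pder_sum _ _ (fun l _ => ((hC2 k l l).differentiable (by simp)).differentiableAt)]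
  have hprod : ∀ i k : Fin n,
      pder k (fun y => pder i (vE n hn0 ε) y * Smat V i k y) x
        = pder k (pder i (vE n hn0 ε)) x * Smat V i k x
          + pder i (vE n hn0 ε) x * pder k (Smat V i k) x :=
    fun i k => pder_mul (snv.pder' i).dAt (((hSC i k).differentiable (by simp)).differentiableAt)
  -- per-(i,k) canonical form of the RHS summand
  have hsummand : ∀ i k : Fin n,
      (((n : ℝ) - 2) / (4 * ((n : ℝ) - 1)) * vE n hn0 ε x *
          pder i (pder k (Smat V i k)) x +
        pder k (fun y => pder i (vE n hn0 ε) y * Smat V i k y) x)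
      = ((((n : ℝ) - 2) / (4 * ((n : ℝ) - 1)) * vE n hn0 ε x) *
            pder i (pder i (pder k (fun z => V z k))) x
          + (((n : ℝ) - 2) / (4 * ((n : ℝ) - 1)) * vE n hn0 ε x) *
            pder i (pder k (pder k (fun z => V z i))) x
          + pder i (pder k (vE n hn0 ε)) x * pder i (fun z => V z k) x
          + pder i (pder k (vE n hn0 ε)) x * pder k (fun z => V z i) x
          + pder i (vE n hn0 ε) x * pder i (pder k (fun z => V z k)) x
          + pder i (vE n hn0 ε) x * pder k (pder k (fun z => V z i)) x)
        + ((-1:ℝ) * ((((n : ℝ) - 2) / (4 * ((n : ℝ) - 1)) * vE n hn0 ε x * (2 / (n:ℝ))) *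
              (∑ l, pder i (pder i (pder l (fun z => V z l))) x))
           + (-1:ℝ) * ((2 / (n:ℝ) * divV V x) * pder i (pder k (vE n hn0 ε)) x)
           + (-1:ℝ) * ((2 / (n:ℝ)) *
              (pder i (vE n hn0 ε) x * (∑ l, pder i (pder l (fun z => V z l)) x))))
          * (if i = k then 1 else 0) := by
    intro i k
    by_cases hik : i = k
    · subst hik
      rw [hprod i i, h2S i i, congrFun (hpderS i i i) x, hSmat_fun i i]
      simp only [if_pos rfl]
      ring
    · rw [hprod i k, h2S i k, congrFun (hpderS i k k) x, hSmat_fun i k, hu2x i k,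
        ha2fun k i k]
      simp only [if_neg hik]
      ring
  -- collapse the Kronecker delta and push sums inward
  have hcol : ∀ i : Fin n, (∑ k,
      (((((n : ℝ) - 2) / (4 * ((n : ℝ) - 1)) * vE n hn0 ε x) *
            pder i (pder i (pder k (fun z => V z k))) x
          + (((n : ℝ) - 2) / (4 * ((n : ℝ) - 1)) * vE n hn0 ε x) *
            pder i (pder k (pder k (fun z => V z i))) x
          + pder i (pder k (vE n hn0 ε)) x * pder i (fun z => V z k) x
          + pder i (pder k (vE n hn0 ε)) x * pder k (fun z => V z i) x
          + pder i (vE n hn0 ε) x * pder i (pder k (fun z => V z k)) x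
          + pder i (vE n hn0 ε) x * pder k (pder k (fun z => V z i)) x)
        + ((-1:ℝ) * ((((n : ℝ) - 2) / (4 * ((n : ℝ) - 1)) * vE n hn0 ε x * (2 / (n:ℝ))) *
              (∑ l, pder i (pder i (pder l (fun z => V z l))) x))
           + (-1:ℝ) * ((2 / (n:ℝ) * divV V x) * pder i (pder k (vE n hn0 ε)) x)
           + (-1:ℝ) * ((2 / (n:ℝ)) *
              (pder i (vE n hn0 ε) x * (∑ l, pder i (pder l (fun z => V z l)) x))))
          * (if i = k then 1 else 0)))
      = ((((n : ℝ) - 2) / (4 * ((n : ℝ) - 1)) * vE n hn0 ε x) *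
            (∑ k, pder i (pder i (pder k (fun z => V z k))) x)
          + (((n : ℝ) - 2) / (4 * ((n : ℝ) - 1)) * vE n hn0 ε x) *
            (∑ k, pder i (pder k (pder k (fun z => V z i))) x)
          + (∑ k, pder i (pder k (vE n hn0 ε)) x * pder i (fun z => V z k) x)
          + (∑ k, pder i (pder k (vE n hn0 ε)) x * pder k (fun z => V z i) x)
          + pder i (vE n hn0 ε) x * (∑ k, pder i (pder k (fun z => V z k)) x)
          + pder i (vE n hn0 ε) x * (∑ k, pder k (pder k (fun z => V z i)) x))
        + ((-1:ℝ) * ((((n : ℝ) - 2) / (4 * ((n : ℝ) - 1)) * vE n hn0 ε x * (2 / (n:ℝ))) *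
              (∑ l, pder i (pder i (pder l (fun z => V z l))) x))
           + (-1:ℝ) * ((2 / (n:ℝ) * divV V x) * pder i (pder i (vE n hn0 ε)) x)
           + (-1:ℝ) * ((2 / (n:ℝ)) *
              (pder i (vE n hn0 ε) x * (∑ l, pder i (pder l (fun z => V z l)) x)))) := by
    intro i
    rw [Finset.sum_add_distrib, sum_delta (fun k =>
      (-1:ℝ) * ((((n : ℝ) - 2) / (4 * ((n : ℝ) - 1)) * vE n hn0 ε x * (2 / (n:ℝ))) *
          (∑ l, pder i (pder i (pder l (fun z => V z l))) x))
        + (-1:ℝ) * ((2 / (n:ℝ) * divV V x) * pder i (pder k (vE n hn0 ε)) x)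
        + (-1:ℝ) * ((2 / (n:ℝ)) *
            (pder i (vE n hn0 ε) x * (∑ l, pder i (pder l (fun z => V z l)) x)))) i]
    congr 1
    simp only [Finset.sum_add_distrib, ← Finset.mul_sum]
  -- symmetry identities for the cross sums
  have hA2 : (∑ i, ∑ k, pder i (pder k (pder k (fun z => V z i))) x)
      = ∑ i, ∑ k, pder i (pder i (pder k (fun z => V z k))) x := by
    rw [Finset.sum_comm]
    refine Finset.sum_congr rfl fun a _ => Finset.sum_congr rfl fun b _ => ?_
    exact (pder_comm ((hC1 a b).contDiffAt)).trans (by rw [ha2fun b a b])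
  have hA4 : (∑ i, ∑ k, pder i (pder k (vE n hn0 ε)) x * pder k (fun z => V z i) x)
      = ∑ i, ∑ k, pder i (pder k (vE n hn0 ε)) x * pder i (fun z => V z k) x := by
    rw [Finset.sum_comm]
    refine Finset.sum_congr rfl fun a _ => Finset.sum_congr rfl fun b _ => ?_
    rw [hu2x a b]
  have hA8 : (∑ i, pder i (pder i (vE n hn0 ε)) x) = 0 := lap_vE hn0 ε hQx
  -- the left-hand side
  have hpsi : psiF n hn0 ε V = fun y => (∑ l, pder l (vE n hn0 ε) y * V y l)
      + ((n:ℝ) - 2) / (2 * (n:ℝ)) * (vE n hn0 ε y * divV V y) := by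
    funext y; unfold psiF; ring
  have snP : ∀ l : Fin n, SmoothNear (fun y => pder l (vE n hn0 ε) y * V y l) x :=
    fun l => (snv.pder' l).mul (SmoothNear.ofContDiff (hVc l))
  have snSum : SmoothNear (fun y => ∑ l, pder l (vE n hn0 ε) y * V y l) x :=
    SmoothNear.sum _ _ (fun l _ => snP l)
  have snDiv : SmoothNear (divV V) x := SmoothNear.ofContDiff hDiv
  have hlapP : ∀ l : Fin n, lap (fun y => pder l (vE n hn0 ε) y * V y l) x
      = 2 * (∑ i, pder i (pder l (vE n hn0 ε)) x * pder i (fun z => V z l) x)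
        + pder l (vE n hn0 ε) x * (∑ i, pder i (pder i (fun z => V z l)) x) := by
    intro l
    rw [lap_mul (snv.pder' l) (SmoothNear.ofContDiff (hVc l)), lap_pder_vE hn0 ε l hQx]
    have hvl : lap (fun z => V z l) x = ∑ i, pder i (pder i (fun z => V z l)) x := rfl
    rw [hvl]
    ring
  have hlapR : lap (fun y => vE n hn0 ε y * divV V y) x
      = 2 * (∑ i, pder i (vE n hn0 ε) x * (∑ l, pder i (pder l (fun z => V z l)) x))
        + vE n hn0 ε x * (∑ i, ∑ l, pder i (pder i (pder l (fun z => V z l))) x) := by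
    rw [lap_mul snv snDiv, lap_vE hn0 ε hQx]
    have h2 : lap (divV V) x = ∑ i, ∑ l, pder i (pder i (pder l (fun z => V z l))) x := by
      show (∑ i, pder i (pder i (divV V)) x) = _
      refine Finset.sum_congr rfl fun i _ => ?_
      rw [hpdiv i]
      exact pder_sum _ _ fun l _ => ((hC2 i l l).differentiable (by simp)).differentiableAt
    have h1 : (∑ i, pder i (vE n hn0 ε) x * pder i (divV V) x)
        = ∑ i, pder i (vE n hn0 ε) x * (∑ l, pder i (pder l (fun z => V z l)) x) :=
      Finset.sum_congr rfl fun i _ => by rw [congrFun (hpdiv i) x]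
    rw [h2, h1]
    ring
  have hLHS : lap (psiF n hn0 ε V) x
      = 2 * (∑ l, ∑ i, pder i (pder l (vE n hn0 ε)) x * pder i (fun z => V z l) x)
        + (∑ l, pder l (vE n hn0 ε) x * (∑ i, pder i (pder i (fun z => V z l)) x))
        + ((n:ℝ) - 2) / (2 * (n:ℝ)) *
            (2 * (∑ i, pder i (vE n hn0 ε) x * (∑ l, pder i (pder l (fun z => V z l)) x))
              + vE n hn0 ε x * (∑ i, ∑ l, pder i (pder i (pder l (fun z => V z l))) x)) := by
    rw [hpsi, lap_add snSum ((snv.mul snDiv).const_mul _),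
      lap_sum _ _ (fun l _ => snP l), lap_const_mul _ (snv.mul snDiv), hlapR,
      Finset.sum_congr rfl fun l _ => hlapP l]
    simp only [Finset.sum_add_distrib, ← Finset.mul_sum]
  have hswapL : (∑ l, ∑ i, pder i (pder l (vE n hn0 ε)) x * pder i (fun z => V z l) x)
      = ∑ i, ∑ k, pder i (pder k (vE n hn0 ε)) x * pder i (fun z => V z k) x :=
    Finset.sum_comm
  -- put everything together
  show lap (psiF n hn0 ε V) x =
      ∑ i, ∑ k,
        (((n : ℝ) - 2) / (4 * ((n : ℝ) - 1)) * vE n hn0 ε x *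
            pder i (pder k (Smat V i k)) x +
          pder k (fun y => pder i (vE n hn0 ε) y * Smat V i k y) x)
  rw [Finset.sum_congr rfl fun i (_ : i ∈ Finset.univ) =>
      Finset.sum_congr rfl fun k (_ : k ∈ Finset.univ) => hsummand i k,
    Finset.sum_congr rfl fun i (_ : i ∈ Finset.univ) => hcol i,
    hLHS, hswapL]
  simp only [Finset.sum_add_distrib, ← Finset.mul_sum]
  rw [hA2, hA4, hA8]
  have hne1 : (n:ℝ) ≠ 0 := by positivity
  have hne2 : (n:ℝ) - 1 ≠ 0 := by
    have : (3:ℝ) ≤ (n:ℝ) := by exact_mod_cast hn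
    linarith
  field_simp
  ring
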